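/- Let (d, Q, E) be a VASS, C, C' ⊆ {1,…,d}, q, q' ∈ Q, v ∈ ℕ^C, v' ∈ ℕ^{C'} satisfying (Θ1): for every m ≥ 1 there exist v̄ ∈ (ℕ≥m)^{C̄}, v̄' ∈ (ℕ≥m)^{C̄'} and a pseudo-run from (q, v ⊕ v̄) to (q', v' ⊕ v̄') traversing every arc at least m times; and (Θ2): there exist Δ ∈ (ℕ≥1)^C, Δ' ∈ (ℕ≥1)^{C'}, Δ̄ ∈ ℤ^{C̄}, Δ̄' ∈ ℤ^{C̄'} with (q, v ⊕ 0) →*C (q, (v + Δ) ⊕ Δ̄) and (q', (v' + Δ') ⊕ Δ̄') →*C' (q', v' ⊕ 0). Then there exist v̄, δ̄ ∈ ℕ^{C̄}, v̄', δ̄' ∈ ℕ^{C̄'} and M ∈ ℕ such that for every m ≥ M there is a run from (q, v ⊕ (v̄ + m·δ̄)) to (q', v' ⊕ (v̄' + m·δ̄')). -/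

import Mathlib

/-- Vectors in `ℤ^d`. -/
abbrev Vec (d : ℕ) : Type := Fin d → ℤ

/-- An arc of a `d`-dimensional VASS with states `Q`. -/
abbrev Arc (Q : Type) (d : ℕ) : Type := Q × Vec d × Q

/-- `IsRunOn E S π q v q' v'`: the list of arcs `π` (all belonging to `E`) forms a
pseudo-run from `(q, v)` to `(q', v')`, all of whose vectors (including endpoints)
are nonnegative on every coordinate in `S`.  Taking `S = ∅` gives pseudo-runs,
`S = Set.univ` gives runs, and `S = ↑C` gives `C`-runs. -/
inductive IsRunOn {Q : Type} {d : ℕ} (E : Finset (Arc Q d)) (S : Set (Fin d)) :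
    List (Arc Q d) → Q → Vec d → Q → Vec d → Prop
  | nil (q : Q) (v : Vec d) (hv : ∀ i ∈ S, 0 ≤ v i) :
      IsRunOn E S [] q v q v
  | cons (q q' q'' : Q) (v v'' z : Vec d) (π : List (Arc Q d))
      (hv : ∀ i ∈ S, 0 ≤ v i) (he : (q, z, q') ∈ E)
      (ht : IsRunOn E S π q' (v + z) q'' v'') :
      IsRunOn E S ((q, z, q') :: π) q v q'' v''

/-- Glueing: `glue C v w` agrees with `v` on coordinates in `C` and with `w` outside `C`. -/
def glue {d : ℕ} (C : Finset (Fin d)) (v w : Vec d) : Vec d :=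
  fun i => if i ∈ C then v i else w i

/-!
Let `b₀` be the pseudo-run that `Θ1` provides for `m = 1`, and `b₁` one for a large `m`: it
traverses every arc more often than `b₀` and ends higher outside `C` and `C'`. Both go from `q` to
`q'`, so the arcs of `b₁` minus those of `b₀` form a circulation; scaled by a large `s` it still
contains every arc and the arcs of the cycles `σ` and `τ` from `Θ2`, and by Euler's theorem the
rest is a cycle `Γ` at `q` (the arcs of `b₀` connect it to `q`). The displacement of `σ`, `Γ` and
`τ` together is `s` times that of `b₁` minus `b₀`: zero on `C ∩ C'`, large and positive on
`C \ C'`, large and negative on `C' \ C`. Hence for all large `m` the schedule `σ^m Γ^m b₀ τ^m` is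
a run: `σ^m` lifts the coordinates in `C` from `v`, `τ^m` lowers those in `C'` to `v'`, and every
other value along the run grows linearly in `m`.
-/

open Filter

section Paths

variable {Q : Type} {d : ℕ} {E : Finset (Arc Q d)}

def IsPath (E : Finset (Arc Q d)) : List (Arc Q d) → Q → Q → Prop
  | [], s, t => s = t
  | e :: π, s, t => e ∈ E ∧ e.1 = s ∧ IsPath E π e.2.2 t

@[simp] lemma isPath_nil {s t : Q} : IsPath E [] s t ↔ s = t := Iff.rfl

@[simp] lemma isPath_cons {e : Arc Q d} {π : List (Arc Q d)} {s t : Q} :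
    IsPath E (e :: π) s t ↔ e ∈ E ∧ e.1 = s ∧ IsPath E π e.2.2 t := Iff.rfl

lemma isPath_append {π₁ π₂ : List (Arc Q d)} {s t : Q} :
    IsPath E (π₁ ++ π₂) s t ↔ ∃ u, IsPath E π₁ s u ∧ IsPath E π₂ u t := by
  induction π₁ generalizing s with
  | nil => simp
  | cons e π₁ ih => simp [ih, and_assoc]

lemma IsPath.append {π₁ π₂ : List (Arc Q d)} {s u t : Q} (h₁ : IsPath E π₁ s u)
    (h₂ : IsPath E π₂ u t) : IsPath E (π₁ ++ π₂) s t :=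
  isPath_append.2 ⟨u, h₁, h₂⟩

lemma IsPath.flatten_replicate {θ : List (Arc Q d)} {s : Q} (h : IsPath E θ s s) (n : ℕ) :
    IsPath E (List.replicate n θ).flatten s s := by
  induction n with
  | zero => rfl
  | succ n ih => simpa [List.replicate_succ] using h.append ih

lemma IsPath.mem_of_mem {π : List (Arc Q d)} {s t : Q} (h : IsPath E π s t) {e : Arc Q d}
    (he : e ∈ π) : e ∈ E := by
  induction π generalizing s with
  | nil => simp at he
  | cons a π ih =>
    obtain ⟨haE, -, h⟩ := h
    rcases List.mem_cons.1 he with rfl | he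
    exacts [haE, ih h he]

lemma IsPath.target_mem {π : List (Arc Q d)} {s t : Q} (h : IsPath E π s t) {V : Set Q}
    (hs : s ∈ V) (hV : ∀ e ∈ π, e.1 ∈ V → e.2.2 ∈ V) : t ∈ V := by
  induction π generalizing s with
  | nil => exact h ▸ hs
  | cons e π ih =>
    obtain ⟨-, rfl, h⟩ := h
    exact ih h (hV e List.mem_cons_self hs) fun a ha => hV a (List.mem_cons_of_mem _ ha)

lemma IsPath.exists_split_of_mem {π : List (Arc Q d)} {s t : Q} (h : IsPath E π s t)
    {e : Arc Q d} (he : e ∈ π) :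
    ∃ β γ, π = β ++ e :: γ ∧ IsPath E β s e.1 ∧ IsPath E γ e.2.2 t := by
  obtain ⟨β, γ, rfl⟩ := List.append_of_mem he
  obtain ⟨u, hβ, heu⟩ := isPath_append.1 h
  exact ⟨β, γ, rfl, heu.2.1 ▸ hβ, heu.2.2⟩

end Paths

section Displacement

variable {Q : Type} {d : ℕ}

def displacement (π : List (Arc Q d)) : Vec d := (π.map fun e => e.2.1).sum

@[simp] lemma displacement_nil : displacement ([] : List (Arc Q d)) = 0 := rfl

@[simp] lemma displacement_cons (e : Arc Q d) (π : List (Arc Q d)) :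
    displacement (e :: π) = e.2.1 + displacement π := by
  simp [displacement]

@[simp] lemma displacement_append (π₁ π₂ : List (Arc Q d)) :
    displacement (π₁ ++ π₂) = displacement π₁ + displacement π₂ := by
  simp [displacement]

@[simp] lemma displacement_flatten_replicate (n : ℕ) (θ : List (Arc Q d)) :
    displacement (List.replicate n θ).flatten = (n : ℤ) • displacement θ := by
  simp [displacement, List.map_flatten, List.sum_flatten]

lemma displacement_eq_multiset_sum (π : List (Arc Q d)) :
    displacement π = ((π : Multiset (Arc Q d)).map (·.2.1)).sum := rfl

def minPrefixDisplacement : List (Arc Q d) → Vec d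
  | [] => 0
  | e :: π => 0 ⊓ (e.2.1 + minPrefixDisplacement π)

@[simp] lemma minPrefixDisplacement_nil : minPrefixDisplacement ([] : List (Arc Q d)) = 0 := rfl

@[simp] lemma minPrefixDisplacement_cons (e : Arc Q d) (π : List (Arc Q d)) :
    minPrefixDisplacement (e :: π) = 0 ⊓ (e.2.1 + minPrefixDisplacement π) := rfl

lemma minPrefixDisplacement_nonpos (π : List (Arc Q d)) : minPrefixDisplacement π ≤ 0 := by
  cases π <;> simp

lemma minPrefixDisplacement_append (π₁ π₂ : List (Arc Q d)) :
    minPrefixDisplacement (π₁ ++ π₂) =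
      minPrefixDisplacement π₁ ⊓ (displacement π₁ + minPrefixDisplacement π₂) := by
  induction π₁ with
  | nil => simpa using (inf_eq_right.2 (minPrefixDisplacement_nonpos π₂)).symm
  | cons e π₁ ih =>
    simp only [List.cons_append, minPrefixDisplacement_cons, ih, displacement_cons, add_inf,
      inf_assoc, add_assoc]

lemma minPrefixDisplacement_flatten_replicate {m : ℕ} (hm : m ≠ 0) (θ : List (Arc Q d)) :
    minPrefixDisplacement (List.replicate m θ).flatten =
      minPrefixDisplacement θ ⊓ (((m : ℤ) - 1) • displacement θ + minPrefixDisplacement θ) := by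
  obtain ⟨n, rfl⟩ := Nat.exists_eq_succ_of_ne_zero hm
  clear hm
  push_cast
  rw [add_sub_cancel_right]
  induction n with
  | zero => simp
  | succ n ih =>
    rw [List.replicate_succ, List.flatten_cons, minPrefixDisplacement_append, ih, add_inf]
    funext i
    simp only [Pi.inf_apply, Pi.add_apply, Pi.smul_apply, smul_eq_mul]
    -- `a + b` lies between `a` and `a + (n + 1) • b`, so it does not change the minimum
    have h : (0 ≤ displacement θ i → 0 ≤ (n : ℤ) * displacement θ i) ∧
        (displacement θ i ≤ 0 → (n : ℤ) * displacement θ i ≤ 0) :=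
      ⟨mul_nonneg n.cast_nonneg, mul_nonpos_of_nonneg_of_nonpos n.cast_nonneg⟩
    push_cast
    rw [add_mul, one_mul]
    omega

end Displacement

section Runs

variable {Q : Type} {d : ℕ} {E : Finset (Arc Q d)} {S : Set (Fin d)}

theorem isRunOn_iff {π : List (Arc Q d)} {q q' : Q} {v v' : Vec d} :
    IsRunOn E S π q v q' v' ↔ IsPath E π q q' ∧ v' = v + displacement π ∧
      ∀ i ∈ S, 0 ≤ v i + minPrefixDisplacement π i := by
  induction π generalizing q v with
  | nil =>
    constructor
    · rintro ⟨⟩; simp_all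
    · rintro ⟨rfl, h, hmin⟩
      simp only [displacement_nil, add_zero] at h
      subst h
      exact .nil q _ (by simpa using hmin)
  | cons e π ih =>
    obtain ⟨a, z, b⟩ := e
    constructor
    · rintro (_ | ⟨_, _, _, _, _, _, _, hv, he, ht⟩)
      obtain ⟨hp, rfl, hmin⟩ := ih.1 ht
      refine ⟨⟨he, rfl, hp⟩, by simp [add_assoc], fun i hi => ?_⟩
      have h₁ := hmin i hi
      have h₂ := hv i hi
      simp only [minPrefixDisplacement_cons, Pi.inf_apply, Pi.add_apply, Pi.zero_apply] at h₁ ⊢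
      omega
    · rintro ⟨⟨he, rfl, hp⟩, rfl, hmin⟩
      have hmin' : ∀ i ∈ S, 0 ≤ v i ∧ 0 ≤ v i + z i + minPrefixDisplacement π i := by
        intro i hi
        have := hmin i hi
        simp only [minPrefixDisplacement_cons, Pi.inf_apply, Pi.add_apply, Pi.zero_apply] at this
        omega
      refine .cons _ _ _ _ _ _ _ (fun i hi => (hmin' i hi).1) he
        (ih.2 ⟨hp, ?_, fun i hi => (hmin' i hi).2⟩)
      simp [add_assoc]

lemma IsRunOn.isPath {π : List (Arc Q d)} {q q' : Q} {v v' : Vec d}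
    (h : IsRunOn E S π q v q' v') : IsPath E π q q' :=
  (isRunOn_iff.1 h).1

lemma IsRunOn.eq_add_displacement {π : List (Arc Q d)} {q q' : Q} {v v' : Vec d}
    (h : IsRunOn E S π q v q' v') : v' = v + displacement π :=
  (isRunOn_iff.1 h).2.1

lemma IsRunOn.append {π₁ π₂ : List (Arc Q d)} {q q' q'' : Q} {v v' v'' : Vec d}
    (h₁ : IsRunOn E S π₁ q v q' v') (h₂ : IsRunOn E S π₂ q' v' q'' v'') :
    IsRunOn E S (π₁ ++ π₂) q v q'' v'' := by
  obtain ⟨hp₁, rfl, hm₁⟩ := isRunOn_iff.1 h₁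
  obtain ⟨hp₂, rfl, hm₂⟩ := isRunOn_iff.1 h₂
  refine isRunOn_iff.2 ⟨hp₁.append hp₂, by rw [displacement_append, add_assoc], fun i hi => ?_⟩
  have h₁ := hm₁ i hi
  have h₂ := hm₂ i hi
  simp only [minPrefixDisplacement_append, Pi.inf_apply, Pi.add_apply] at h₁ h₂ ⊢
  omega

lemma eventually_nonneg_add_mul (a : ℤ) {b : ℤ} (hb : 1 ≤ b) :
    ∀ᶠ m : ℕ in atTop, 0 ≤ a + m * b := by
  filter_upwards [eventually_ge_atTop a.natAbs] with m hm
  have hm' : |a| ≤ m := by rw [Int.abs_eq_natAbs]; exact_mod_cast hm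
  nlinarith [neg_abs_le a]

lemma IsPath.eventually_isRunOn {π : List (Arc Q d)} {q q' : Q} (h : IsPath E π q q')
    (w : Vec d) {p : Vec d} (hp : ∀ i, 1 ≤ p i) :
    ∀ᶠ m : ℕ in atTop, IsRunOn E Set.univ π q (w + (m : ℤ) • p) q'
      (w + displacement π + (m : ℤ) • p) := by
  filter_upwards [eventually_all.2 fun i =>
    eventually_nonneg_add_mul (w i + minPrefixDisplacement π i) (hp i)] with m hm
  refine isRunOn_iff.2 ⟨h, by abel, fun i _ => ?_⟩
  simp only [Pi.add_apply, Pi.smul_apply, smul_eq_mul]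
  linarith [hm i]

/-- On the coordinates in `S`, every copy of `θ` in `θ^m` starts above `y₀`, from where `θ` is an
`S`-run; on the other coordinates, the starts of the first and of the last copy grow with `m`. -/
lemma IsRunOn.eventually_pump {θ : List (Arc Q d)} {q : Q} {y₀ y₁ : Vec d}
    (hθ : IsRunOn E S θ q y₀ q y₁) {w p : Vec d}
    (hS : ∀ i ∈ S, y₀ i ≤ w i + p i ∧ 0 ≤ p i ∧ 0 ≤ p i + displacement θ i)
    (hSc : ∀ i ∉ S, 1 ≤ p i ∧ 1 ≤ p i + displacement θ i) :
    ∀ᶠ m : ℕ in atTop, IsRunOn E Set.univ (List.replicate m θ).flatten q (w + (m : ℤ) • p) q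
      (w + (m : ℤ) • (p + displacement θ)) := by
  obtain ⟨hpath, -, hmin⟩ := isRunOn_iff.1 hθ
  set e := displacement θ
  set L := minPrefixDisplacement θ
  have key : ∀ i, ∀ᶠ m : ℕ in atTop, 1 ≤ m →
      0 ≤ w i + m * p i + L i ∧ 0 ≤ w i + m * p i + ((m - 1) * e i + L i) := by
    intro i
    by_cases hi : i ∈ S
    · obtain ⟨h₀, hp, hpe⟩ := hS i hi
      refine Eventually.of_forall fun m hm => ?_
      have hm' : (0 : ℤ) ≤ m - 1 := by
        have : (1 : ℤ) ≤ m := by exact_mod_cast hm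
        linarith
      have := hmin i hi
      constructor <;> nlinarith [mul_nonneg hm' hp, mul_nonneg hm' hpe]
    · obtain ⟨hp, hpe⟩ := hSc i hi
      filter_upwards [eventually_nonneg_add_mul (w i + L i) hp,
        eventually_nonneg_add_mul (w i - e i + L i) hpe] with m h₁ h₂ _
      constructor <;> linarith
  filter_upwards [eventually_ge_atTop 1, eventually_all.2 key] with m hm hkey
  refine isRunOn_iff.2 ⟨hpath.flatten_replicate m, ?_, fun i _ => ?_⟩
  · rw [displacement_flatten_replicate, smul_add, add_assoc]
  · rw [minPrefixDisplacement_flatten_replicate (by omega)]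
    simp only [Pi.add_apply, Pi.smul_apply, Pi.inf_apply, smul_eq_mul, add_inf, le_inf_iff]
    exact hkey i hm

end Runs

section Flows

variable {Q : Type} {d : ℕ} {E : Finset (Arc Q d)}

-- flow conservation, except that one unit leaves `s` and one unit enters `t`
def IsFlow (c : Multiset (Arc Q d)) (s t : Q) : Prop :=
  s ::ₘ c.map (·.2.2) = t ::ₘ c.map Prod.fst

def IsCirculation (c : Multiset (Arc Q d)) : Prop :=
  c.map Prod.fst = c.map (·.2.2)

lemma isFlow_self_iff {c : Multiset (Arc Q d)} {s : Q} : IsFlow c s s ↔ IsCirculation c := by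
  rw [IsFlow, IsCirculation, Multiset.cons_inj_right, eq_comm]

lemma IsPath.isFlow {π : List (Arc Q d)} {s t : Q} (h : IsPath E π s t) :
    IsFlow (π : Multiset (Arc Q d)) s t := by
  induction π generalizing s with
  | nil => exact congrArg (· ::ₘ 0) h
  | cons e π ih =>
    obtain ⟨-, rfl, h⟩ := h
    rw [IsFlow, ← Multiset.cons_coe, Multiset.map_cons, Multiset.map_cons, ih h,
      Multiset.cons_swap]

lemma IsFlow.isCirculation_tsub [DecidableEq Q] {c c' : Multiset (Arc Q d)} {s t : Q}
    (h : IsFlow c s t) (h' : IsFlow c' s t) (hle : c ≤ c') : IsCirculation (c' - c) := by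
  rw [← tsub_add_cancel_of_le hle, IsFlow, Multiset.map_add, Multiset.map_add,
    ← Multiset.add_cons, ← Multiset.add_cons, ← h] at h'
  exact (add_right_cancel h').symm

lemma IsCirculation.add {c c' : Multiset (Arc Q d)} (h : IsCirculation c)
    (h' : IsCirculation c') : IsCirculation (c + c') := by
  unfold IsCirculation at *
  rw [Multiset.map_add, Multiset.map_add, h, h']

lemma IsCirculation.nsmul {c : Multiset (Arc Q d)} (h : IsCirculation c) (n : ℕ) :
    IsCirculation (n • c) := by
  unfold IsCirculation at *
  rw [Multiset.map_nsmul, Multiset.map_nsmul, h]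

lemma IsFlow.exists_isPath_le {c : Multiset (Arc Q d)} {s t : Q} (h : IsFlow c s t)
    (hcE : ∀ e ∈ c, e ∈ E) : ∃ π, IsPath E π s t ∧ (π : Multiset (Arc Q d)) ≤ c := by
  induction c using Multiset.strongInductionOn generalizing s with
  | _ c ih =>
  by_cases hst : s = t
  · exact ⟨[], hst, Multiset.zero_le c⟩
  have hs : s ∈ c.map Prod.fst := by
    have : s ∈ t ::ₘ c.map Prod.fst := h ▸ Multiset.mem_cons_self _ _
    exact (Multiset.mem_cons.1 this).resolve_left hst
  obtain ⟨e, he, rfl⟩ := Multiset.mem_map.1 hs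
  obtain ⟨c', rfl⟩ := Multiset.exists_cons_of_mem he
  have h' : IsFlow c' e.2.2 t := by
    rw [IsFlow, Multiset.map_cons, Multiset.map_cons, Multiset.cons_swap t] at h
    exact (Multiset.cons_inj_right _).1 h
  obtain ⟨π, hπ, hπc⟩ :=
    ih c' (Multiset.lt_cons_self c' e) h' fun a ha => hcE a (Multiset.mem_cons_of_mem ha)
  exact ⟨e :: π, ⟨hcE e he, rfl, hπ⟩, Multiset.cons_le_cons e hπc⟩

lemma IsCirculation.exists_cycle_le {c : Multiset (Arc Q d)} (h : IsCirculation c)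
    (hcE : ∀ e ∈ c, e ∈ E) {e : Arc Q d} (he : e ∈ c) :
    ∃ γ ≠ [], IsPath E γ e.1 e.1 ∧ (γ : Multiset (Arc Q d)) ≤ c := by
  obtain ⟨c', rfl⟩ := Multiset.exists_cons_of_mem he
  have h' : IsFlow c' e.2.2 e.1 := by
    rw [IsCirculation, Multiset.map_cons, Multiset.map_cons] at h
    exact h.symm
  obtain ⟨π, hπ, hπc⟩ := h'.exists_isPath_le fun a ha => hcE a (Multiset.mem_cons_of_mem ha)
  exact ⟨e :: π, List.cons_ne_nil e π, ⟨hcE e he, rfl, hπ⟩, Multiset.cons_le_cons e hπc⟩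

theorem IsCirculation.exists_cycle_eq {c : Multiset (Arc Q d)} (hc : IsCirculation c)
    (hcE : ∀ e ∈ c, e ∈ E) {x : Q}
    (hreach : ∀ e ∈ c, ∃ α, IsPath E α x e.1 ∧ ∀ a ∈ α, a ∈ c) :
    ∃ γ, IsPath E γ x x ∧ (γ : Multiset (Arc Q d)) = c := by
  classical
  suffices key : ∀ T : List (Arc Q d), IsPath E T x x → ↑T ≤ c →
      ∃ γ, IsPath E γ x x ∧ (γ : Multiset (Arc Q d)) = c from
    key [] rfl (Multiset.zero_le c)
  intro T
  induction hn : Multiset.card c - T.length using Nat.strong_induction_on generalizing T with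
  | _ n ih =>
  intro hT hTc
  set r : Multiset (Arc Q d) := c - ↑T
  have hrT : r + ↑T = c := tsub_add_cancel_of_le hTc
  obtain hr0 | ⟨f, hf⟩ := Multiset.empty_or_exists_mem r
  · exact ⟨T, hT, le_antisymm hTc (tsub_eq_zero_iff_le.1 hr0)⟩
  have hrc : IsCirculation r := hT.isFlow.isCirculation_tsub (isFlow_self_iff.2 hc) hTc
  let V : Set Q := {w | ∃ β γ, T = β ++ γ ∧ IsPath E β x w ∧ IsPath E γ w x}
  -- otherwise `V` would be closed under the arcs of `c`, hence contain the source of `f`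
  have hvisit : ∃ e ∈ r, e.1 ∈ V := by
    by_contra! H
    obtain ⟨α, hα, hαc⟩ := hreach f (Multiset.mem_of_le tsub_le_self hf)
    refine H f hf (hα.target_mem ⟨[], T, rfl, rfl, hT⟩ fun a ha haV => ?_)
    have haT : a ∈ T := by
      rcases Multiset.mem_add.1 (hrT ▸ hαc a ha) with har | haT
      exacts [absurd haV (H a har), Multiset.mem_coe.1 haT]
    obtain ⟨β, γ, rfl, hβ, hγ⟩ := hT.exists_split_of_mem haT
    exact ⟨β ++ [a], γ, by simp, hβ.append ⟨hT.mem_of_mem (by simp), rfl, rfl⟩, hγ⟩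
  obtain ⟨e, her, β, γ, rfl, hβ, hγ⟩ := hvisit
  obtain ⟨C, hCne, hC, hCr⟩ :=
    hrc.exists_cycle_le (fun a ha => hcE a (Multiset.mem_of_le tsub_le_self ha)) her
  have hsplice : ((β ++ C ++ γ : List (Arc Q d)) : Multiset (Arc Q d)) = ↑(β ++ γ) + ↑C := by
    simp only [← Multiset.coe_add]
    abel
  have hle : ((β ++ C ++ γ : List (Arc Q d)) : Multiset (Arc Q d)) ≤ c := by
    rw [hsplice, ← hrT, add_comm]
    exact add_le_add_left hCr _
  refine ih _ ?_ _ rfl ((hβ.append hC).append hγ) hle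
  have := Multiset.card_le_card hle
  have := List.length_pos_iff.2 hCne
  rw [← hn]
  simp only [Multiset.coe_card, List.length_append] at *
  omega

end Flows

section CycleFromPseudoRuns

variable {Q : Type} {d : ℕ} [DecidableEq Q] {E : Finset (Arc Q d)}

-- `List.count` on arcs uses the `BEq` instance of the product type, `Multiset.count` the one
-- derived from `DecidableEq`.
lemma list_count_eq_multiset_count (π : List (Arc Q d)) (e : Arc Q d) :
    π.count e = Multiset.count e (π : Multiset (Arc Q d)) := by
  rw [Multiset.coe_count]
  congr
  exact lawful_beq_subsingleton _ _

lemma IsPath.count_eq_zero {π : List (Arc Q d)} {s t : Q} (h : IsPath E π s t) {e : Arc Q d}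
    (he : e ∉ E) : Multiset.count e (π : Multiset (Arc Q d)) = 0 :=
  Multiset.count_eq_zero.2 fun hπ => he (h.mem_of_mem (Multiset.mem_coe.1 hπ))

theorem exists_cycle_displacement_eq {q q' : Q} {σ τ b₀ b₁ : List (Arc Q d)}
    (hσ : IsPath E σ q q) (hτ : IsPath E τ q' q') (hb₀ : IsPath E b₀ q q')
    (hb₁ : IsPath E b₁ q q') (hcover : ∀ e ∈ E, e ∈ b₀)
    (hlt : ∀ e ∈ E, b₀.count e < b₁.count e) {s : ℕ} (hs : σ.length + τ.length < s) :
    ∃ Γ, IsPath E Γ q q ∧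
      displacement Γ + displacement σ + displacement τ =
        (s : ℤ) • (displacement b₁ - displacement b₀) := by
  simp only [list_count_eq_multiset_count] at hlt
  set D : Multiset (Arc Q d) := ↑b₁ - ↑b₀
  set c : Multiset (Arc Q d) := s • D - (↑σ + ↑τ)
  have hcount : ∀ e, c.count e = s * (Multiset.count e ↑b₁ - Multiset.count e ↑b₀) -
      (Multiset.count e ↑σ + Multiset.count e ↑τ) := by
    simp only [c, D, Multiset.count_sub, Multiset.count_nsmul, Multiset.count_add, implies_true]
  have hlarge : ∀ e ∈ E, Multiset.count e ↑σ + Multiset.count e ↑τ <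
      s * (Multiset.count e ↑b₁ - Multiset.count e ↑b₀) := by
    intro e he
    have := Nat.le_mul_of_pos_right s (Nat.sub_pos_of_lt (hlt e he))
    have := Multiset.count_le_card e (σ : Multiset (Arc Q d))
    have := Multiset.count_le_card e (τ : Multiset (Arc Q d))
    simp only [Multiset.coe_card] at *
    omega
  have hb₀₁ : (b₀ : Multiset (Arc Q d)) ≤ b₁ := by
    refine Multiset.le_iff_count.2 fun e => ?_
    by_cases he : e ∈ E
    · exact (hlt e he).le
    · simp [hb₀.count_eq_zero he]
  have hστ : ↑σ + ↑τ ≤ s • D := by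
    refine Multiset.le_iff_count.2 fun e => ?_
    by_cases he : e ∈ E
    · rw [Multiset.count_add, Multiset.count_nsmul, Multiset.count_sub]
      exact (hlarge e he).le
    · rw [Multiset.count_add, hσ.count_eq_zero he, hτ.count_eq_zero he]
      exact Nat.zero_le _
  have hEc : ∀ e ∈ E, e ∈ c := fun e he => by
    rw [← Multiset.count_pos, hcount]
    exact Nat.sub_pos_of_lt (hlarge e he)
  have hcE : ∀ e ∈ c, e ∈ E := fun e he => by
    by_contra hE
    rw [← Multiset.count_pos, hcount, hb₀.count_eq_zero hE, hb₁.count_eq_zero hE] at he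
    simp at he
  have hcirc : IsCirculation c := by
    have hD := hb₀.isFlow.isCirculation_tsub hb₁.isFlow hb₀₁
    have hστ' := (isFlow_self_iff.1 hσ.isFlow).add (isFlow_self_iff.1 hτ.isFlow)
    exact (isFlow_self_iff.2 hστ').isCirculation_tsub (isFlow_self_iff.2 (hD.nsmul s)) hστ
      (s := q)
  have hreach : ∀ e ∈ c, ∃ α, IsPath E α q e.1 ∧ ∀ a ∈ α, a ∈ c := by
    intro e he
    obtain ⟨β, γ, -, hβ, -⟩ := hb₀.exists_split_of_mem (hcover e (hcE e he))
    exact ⟨β, hβ, fun a ha => hEc a (hβ.mem_of_mem ha)⟩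
  obtain ⟨Γ, hΓ, hΓc⟩ := hcirc.exists_cycle_eq hcE hreach
  refine ⟨Γ, hΓ, ?_⟩
  have key : (Γ : Multiset (Arc Q d)) + (↑σ + ↑τ) = s • D := hΓc ▸ tsub_add_cancel_of_le hστ
  have hsum := congrArg (fun c : Multiset (Arc Q d) => (c.map (·.2.1)).sum) key
  have hD := congrArg (fun c : Multiset (Arc Q d) => (c.map (·.2.1)).sum)
    (tsub_add_cancel_of_le hb₀₁)
  simp only [Multiset.map_add, Multiset.sum_add, Multiset.map_nsmul, Multiset.sum_nsmul,
    ← displacement_eq_multiset_sum] at hsum hD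
  rw [← hD, add_sub_cancel_right, natCast_zsmul, ← hsum, add_assoc]

end CycleFromPseudoRuns

section Schedule

variable {Q : Type} {d : ℕ} {E : Finset (Arc Q d)}

lemma glue_apply_of_mem {C : Finset (Fin d)} {v w : Vec d} {i : Fin d} (hi : i ∈ C) :
    glue C v w i = v i := if_pos hi

lemma glue_apply_of_notMem {C : Finset (Fin d)} {v w : Vec d} {i : Fin d} (hi : i ∉ C) :
    glue C v w i = w i := if_neg hi

lemma glue_add_smul {C : Finset (Fin d)} {δ : Vec d} (hδ : ∀ i ∈ C, δ i = 0) (v w : Vec d)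
    (m : ℤ) : glue C v (w + m • δ) = glue C v w + m • δ := by
  funext i
  by_cases hi : i ∈ C <;> simp [glue, hi, hδ]

/-- The phases `σ^m`, `Γ^m`, `b₀`, `τ^m` start at values growing with `m` at the rates `δ`,
`δ + displacement σ`, `δ + ζ - displacement τ` (twice), and the run ends at rate `δ + ζ`; where
a rate is not positive, `σ` (on `C`) or `τ` (on `C'`) keeps the run nonnegative. -/
lemma eventually_isRunOn_schedule {C C' : Finset (Fin d)} {q q' : Q}
    {v v' Δ Δ' Δb Δb' vb₀ vb₀' ζ δ : Vec d} {σ τ b₀ Γ : List (Arc Q d)}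
    (hσ : IsRunOn E ↑C σ q (glue C v 0) q (glue C (v + Δ) Δb))
    (hτ : IsRunOn E ↑C' τ q' (glue C' (v' + Δ') Δb') q' (glue C' v' 0))
    (hb₀ : IsRunOn E ∅ b₀ q (glue C v vb₀) q' (glue C' v' vb₀')) (hΓ : IsPath E Γ q q)
    (hζ : displacement Γ + displacement σ + displacement τ = ζ)
    (hδC : ∀ i ∈ C, δ i = 0) (hδC' : ∀ i ∈ C', δ i + ζ i = 0) (hδ : ∀ i ∉ C, 1 ≤ δ i)
    (hσδ : ∀ i, 1 ≤ δ i + displacement σ i) (hΓδ : ∀ i, 1 ≤ δ i + ζ i - displacement τ i)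
    (hτδ : ∀ i ∉ C', 1 ≤ δ i + ζ i) :
    ∀ᶠ m : ℕ in atTop, ∃ π, IsRunOn E Set.univ π q (glue C v (vb₀ + (m : ℤ) • δ))
      q' (glue C' v' (vb₀' + (m : ℤ) • (δ + ζ))) := by
  have hζi : ∀ i, displacement Γ i + displacement σ i + displacement τ i = ζ i :=
    fun i => by rw [← hζ]; rfl
  have hσrun := hσ.eventually_pump (w := glue C v vb₀) (p := δ)
    (fun i hi => by
      rw [Finset.mem_coe] at hi
      simp only [glue_apply_of_mem hi, hδC i hi]
      exact ⟨by simp, le_rfl, by linarith [hσδ i, hδC i hi]⟩)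
    (fun i hi => ⟨hδ i hi, hσδ i⟩)
  have hΓrun := (isRunOn_iff.2 ⟨hΓ, rfl, by simp⟩ : IsRunOn E ∅ Γ q 0 q (0 + displacement Γ))
    |>.eventually_pump (w := glue C v vb₀) (p := δ + displacement σ) (by simp)
      (fun i _ => by simp only [Pi.add_apply]; exact ⟨hσδ i, by linarith [hΓδ i, hζi i]⟩)
  have hb₀run := hb₀.isPath.eventually_isRunOn (glue C v vb₀)
    (p := δ + displacement σ + displacement Γ)
    fun i => by simp only [Pi.add_apply]; linarith [hΓδ i, hζi i]
  have hτrun := hτ.eventually_pump (w := glue C' v' vb₀')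
    (p := δ + displacement σ + displacement Γ)
    (fun i hi => by
      rw [Finset.mem_coe] at hi
      have hend := congrFun hτ.eq_add_displacement i
      simp only [Pi.add_apply, glue_apply_of_mem hi] at hend ⊢
      exact ⟨by linarith [hζi i, hδC' i hi], by linarith [hΓδ i, hζi i],
        by linarith [hζi i, hδC' i hi]⟩)
    (fun i hi => by
      simp only [Pi.add_apply]
      exact ⟨by linarith [hΓδ i, hζi i], by linarith [hτδ i hi, hζi i]⟩)
  filter_upwards [hσrun, hΓrun, hb₀run, hτrun] with m rσ rΓ rb₀ rτ
  rw [← hb₀.eq_add_displacement] at rb₀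
  rw [show δ + displacement σ + displacement Γ + displacement τ = δ + ζ by rw [← hζ]; abel] at rτ
  rw [glue_add_smul hδC, glue_add_smul fun i hi => by simpa using hδC' i hi]
  exact ⟨_, rσ.append (rΓ.append (rb₀.append rτ))⟩

-- forced on `C` and `C'`, where the run has to start at `v` and end at `v'`; large elsewhere
def startRate (C C' : Finset (Fin d)) (ζ eσ eτ : Vec d) : Vec d :=
  fun i => if i ∈ C then 0 else if i ∈ C' then -ζ i else |ζ i| + |eσ i| + |eτ i| + 1

lemma startRate_spec {C C' : Finset (Fin d)} {ζ eσ eτ : Vec d} (hσ : ∀ i ∈ C, 1 ≤ eσ i)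
    (hτ : ∀ i ∈ C', eτ i ≤ -1)
    (hζ : ∀ i, (i ∈ C → i ∈ C' → ζ i = 0) ∧ (i ∈ C → i ∉ C' → |eσ i| + |eτ i| < ζ i) ∧
      (i ∉ C → i ∈ C' → ζ i + (|eσ i| + |eτ i|) < 0)) (i : Fin d) :
    (i ∈ C → startRate C C' ζ eσ eτ i = 0) ∧ (i ∈ C' → startRate C C' ζ eσ eτ i + ζ i = 0) ∧
      (i ∉ C → 1 ≤ startRate C C' ζ eσ eτ i) ∧ 1 ≤ startRate C C' ζ eσ eτ i + eσ i ∧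
      1 ≤ startRate C C' ζ eσ eτ i + ζ i - eτ i ∧
      (i ∉ C' → 1 ≤ startRate C C' ζ eσ eτ i + ζ i) := by
  obtain ⟨hζ₀, hζpos, hζneg⟩ := hζ i
  have := neg_abs_le (ζ i); have := neg_abs_le (eσ i); have := neg_abs_le (eτ i)
  have := le_abs_self (eσ i); have := le_abs_self (eτ i)
  have := abs_nonneg (ζ i); have := abs_nonneg (eσ i); have := abs_nonneg (eτ i)
  by_cases hi : i ∈ C <;> by_cases hi' : i ∈ C' <;>
    simp only [startRate, hi, hi', if_true, if_false, not_true_eq_false, not_false_eq_true,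
      true_implies, false_implies, true_and, and_true]
  · have := hζ₀ hi hi'; have := hσ i hi; have := hτ i hi'
    exact ⟨by linarith, by linarith, by linarith⟩
  · have := hζpos hi hi'; have := hσ i hi
    exact ⟨by linarith, by linarith, by linarith⟩
  · have := hζneg hi hi'; have := hτ i hi'
    exact ⟨by linarith, by linarith, by linarith, by linarith⟩
  · exact ⟨by linarith, by linarith, by linarith, by linarith⟩

theorem exists_run_family {C C' : Finset (Fin d)} {q q' : Q}
    {v v' Δ Δ' Δb Δb' vb₀ vb₀' ζ : Vec d} {σ τ b₀ Γ : List (Arc Q d)}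
    (hσ : IsRunOn E ↑C σ q (glue C v 0) q (glue C (v + Δ) Δb)) (hΔ : ∀ i ∈ C, 1 ≤ Δ i)
    (hτ : IsRunOn E ↑C' τ q' (glue C' (v' + Δ') Δb') q' (glue C' v' 0))
    (hΔ' : ∀ i ∈ C', 1 ≤ Δ' i)
    (hb₀ : IsRunOn E ∅ b₀ q (glue C v vb₀) q' (glue C' v' vb₀'))
    (hvb₀ : ∀ i ∉ C, 0 ≤ vb₀ i) (hvb₀' : ∀ i ∉ C', 0 ≤ vb₀' i) (hΓ : IsPath E Γ q q)
    (hζ : displacement Γ + displacement σ + displacement τ = ζ)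
    (hζsign : ∀ i, (i ∈ C → i ∈ C' → ζ i = 0) ∧
      (i ∈ C → i ∉ C' → |displacement σ i| + |displacement τ i| < ζ i) ∧
      (i ∉ C → i ∈ C' → ζ i + (|displacement σ i| + |displacement τ i|) < 0)) :
    ∃ vb δb vb' δb' : Vec d, (∀ i ∉ C, 0 ≤ vb i) ∧ (∀ i ∉ C, 0 ≤ δb i) ∧
      (∀ i ∉ C', 0 ≤ vb' i) ∧ (∀ i ∉ C', 0 ≤ δb' i) ∧
      ∃ M : ℕ, ∀ m : ℕ, M ≤ m →
        ∃ π, IsRunOn E Set.univ π q (glue C v (vb + (m : ℤ) • δb))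
          q' (glue C' v' (vb' + (m : ℤ) • δb')) := by
  have hσC : ∀ i ∈ C, 1 ≤ displacement σ i := fun i hi => by
    have := congrFun hσ.eq_add_displacement i
    simp only [Pi.add_apply, glue_apply_of_mem hi] at this
    linarith [hΔ i hi]
  have hτC' : ∀ i ∈ C', displacement τ i ≤ -1 := fun i hi => by
    have := congrFun hτ.eq_add_displacement i
    simp only [Pi.add_apply, glue_apply_of_mem hi] at this
    linarith [hΔ' i hi]
  have hrate := startRate_spec hσC hτC' hζsign
  simp only [forall_and] at hrate
  obtain ⟨hδC, hδC', hδ, hσδ, hΓδ, hτδ⟩ := hrate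
  obtain ⟨M, hM⟩ := eventually_atTop.1 <|
    eventually_isRunOn_schedule hσ hτ hb₀ hΓ hζ hδC hδC' hδ hσδ hΓδ hτδ
  exact ⟨vb₀, _, vb₀', _, hvb₀, fun i hi => (hδ i hi).trans' zero_le_one, hvb₀',
    fun i hi => (hτδ i hi).trans' zero_le_one, M, hM⟩

lemma sign_smul_sub_of_glue {C C' : Finset (Fin d)} {v v' w₀ w₀' w₁ w₁' e₀ e₁ K : Vec d}
    {s : ℕ} (h₀ : glue C' v' w₀' = glue C v w₀ + e₀) (h₁ : glue C' v' w₁' = glue C v w₁ + e₁)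
    (hw : ∀ i ∉ C, w₀ i < w₁ i) (hw' : ∀ i ∉ C', w₀' i < w₁' i) (hs : ∀ i, K i < s)
    (i : Fin d) :
    (i ∈ C → i ∈ C' → ((s : ℤ) • (e₁ - e₀)) i = 0) ∧
      (i ∈ C → i ∉ C' → K i < ((s : ℤ) • (e₁ - e₀)) i) ∧
      (i ∉ C → i ∈ C' → ((s : ℤ) • (e₁ - e₀)) i + K i < 0) := by
  have h₀i := congrFun h₀ i
  have h₁i := congrFun h₁ i
  have hsi := hs i
  simp only [Pi.add_apply] at h₀i h₁i
  simp only [Pi.smul_apply, Pi.sub_apply, smul_eq_mul]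
  refine ⟨fun hi hi' => ?_, fun hi hi' => ?_, fun hi hi' => ?_⟩
  · simp only [glue_apply_of_mem hi, glue_apply_of_mem hi'] at h₀i h₁i
    rw [show e₁ i - e₀ i = 0 by linarith, mul_zero]
  · simp only [glue_apply_of_mem hi, glue_apply_of_notMem hi'] at h₀i h₁i
    nlinarith [hw' i hi']
  · simp only [glue_apply_of_notMem hi, glue_apply_of_mem hi'] at h₀i h₁i
    nlinarith [hw i hi]

end Schedule

theorem unconstrained_remark_general {d : ℕ} {Q : Type} [DecidableEq Q]
    (E : Finset (Arc Q d)) (C C' : Finset (Fin d))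
    (q q' : Q) (v v' : Vec d)
    (h1 : ∀ m : ℕ, 1 ≤ m → ∃ vb vb' : Vec d,
      (∀ i ∉ C, (m : ℤ) ≤ vb i) ∧ (∀ i ∉ C', (m : ℤ) ≤ vb' i) ∧
      ∃ π, IsRunOn E ∅ π q (glue C v vb) q' (glue C' v' vb') ∧
        ∀ e ∈ E, m ≤ π.count e)
    (h2 : ∃ Δ Δ' Δb Δb' : Vec d,
      (∀ i ∈ C, 1 ≤ Δ i) ∧ (∀ i ∈ C', 1 ≤ Δ' i) ∧
      (∃ π, IsRunOn E ↑C π q (glue C v 0) q (glue C (v + Δ) Δb)) ∧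
      (∃ π, IsRunOn E ↑C' π q' (glue C' (v' + Δ') Δb') q' (glue C' v' 0))) :
    ∃ vb δb vb' δb' : Vec d, (∀ i ∉ C, 0 ≤ vb i) ∧ (∀ i ∉ C, 0 ≤ δb i) ∧
      (∀ i ∉ C', 0 ≤ vb' i) ∧ (∀ i ∉ C', 0 ≤ δb' i) ∧
      ∃ M : ℕ, ∀ m : ℕ, M ≤ m →
        ∃ π, IsRunOn E Set.univ π q (glue C v (vb + (m : ℤ) • δb))
          q' (glue C' v' (vb' + (m : ℤ) • δb')) := by
  obtain ⟨Δ, Δ', Δb, Δb', hΔ, hΔ', ⟨σ, hσ⟩, ⟨τ, hτ⟩⟩ := h2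
  obtain ⟨vb₀, vb₀', hvb₀, hvb₀', b₀, hb₀, hcount₀⟩ := h1 1 le_rfl
  obtain ⟨m₁, hm₁, hlen, hvb₀m, hvb₀'m⟩ : ∃ m₁ : ℕ, 1 ≤ m₁ ∧ b₀.length < m₁ ∧
      (∀ i, vb₀ i < m₁) ∧ ∀ i, vb₀' i < m₁ :=
    ((eventually_ge_atTop 1).and ((eventually_gt_atTop _).and
      ((eventually_all.2 fun i => tendsto_natCast_atTop_atTop.eventually_gt_atTop (vb₀ i)).and
        (eventually_all.2 fun i =>
          tendsto_natCast_atTop_atTop.eventually_gt_atTop (vb₀' i))))).exists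
  obtain ⟨vb₁, vb₁', hvb₁, hvb₁', b₁, hb₁, hcount₁⟩ := h1 m₁ hm₁
  obtain ⟨s, hsl, hsd⟩ : ∃ s : ℕ, σ.length + τ.length < s ∧
      ∀ i, |displacement σ i| + |displacement τ i| < s :=
    ((eventually_gt_atTop _).and (eventually_all.2 fun i =>
      tendsto_natCast_atTop_atTop.eventually_gt_atTop _)).exists
  obtain ⟨Γ, hΓ, hΓd⟩ := exists_cycle_displacement_eq hσ.isPath hτ.isPath hb₀.isPath hb₁.isPath
    (fun e he => List.count_pos_iff.1 (hcount₀ e he))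
    (fun e he => List.count_le_length.trans_lt (hlen.trans_le (hcount₁ e he))) hsl
  exact exists_run_family hσ hΔ hτ hΔ' hb₀ (fun i hi => (Nat.cast_nonneg 1).trans (hvb₀ i hi))
    (fun i hi => (Nat.cast_nonneg 1).trans (hvb₀' i hi)) hΓ hΓd
    (sign_smul_sub_of_glue hb₀.eq_add_displacement hb₁.eq_add_displacement
      (fun i hi => (hvb₀m i).trans_le (hvb₁ i hi)) (fun i hi => (hvb₀'m i).trans_le (hvb₁' i hi))
      hsd)

/-- remark after the proposition: under `Θ1` and `Θ2` there are `v̄, δ̄, v̄', δ̄'`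
and `M` such that for all `m ≥ M` there is a run from `(q, v ⊕ (v̄ + m·δ̄))` to
`(q', v' ⊕ (v̄' + m·δ̄'))`. -/
theorem unconstrained_remark {d : ℕ} {Q : Type} [DecidableEq Q]
    (hd : 1 ≤ d) (E : Finset (Arc Q d)) (C C' : Finset (Fin d))
    (q q' : Q) (v v' : Vec d)
    (hv : ∀ i ∈ C, 0 ≤ v i) (hv' : ∀ i ∈ C', 0 ≤ v' i)
    (h1 : ∀ m : ℕ, 1 ≤ m → ∃ vb vb' : Vec d,
      (∀ i ∉ C, (m : ℤ) ≤ vb i) ∧ (∀ i ∉ C', (m : ℤ) ≤ vb' i) ∧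
      ∃ π, IsRunOn E ∅ π q (glue C v vb) q' (glue C' v' vb') ∧
        ∀ e ∈ E, m ≤ π.count e)
    (h2 : ∃ Δ Δ' Δb Δb' : Vec d,
      (∀ i ∈ C, 1 ≤ Δ i) ∧ (∀ i ∈ C', 1 ≤ Δ' i) ∧
      (∃ π, IsRunOn E ↑C π q (glue C v 0) q (glue C (v + Δ) Δb)) ∧
      (∃ π, IsRunOn E ↑C' π q' (glue C' (v' + Δ') Δb') q' (glue C' v' 0))) :
    ∃ vb δb vb' δb' : Vec d, (∀ i ∉ C, 0 ≤ vb i) ∧ (∀ i ∉ C, 0 ≤ δb i) ∧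
      (∀ i ∉ C', 0 ≤ vb' i) ∧ (∀ i ∉ C', 0 ≤ δb' i) ∧
      ∃ M : ℕ, ∀ m : ℕ, M ≤ m →
        ∃ π, IsRunOn E Set.univ π q (glue C v (vb + (m : ℤ) • δb))
          q' (glue C' v' (vb' + (m : ℤ) • δb')) :=
  unconstrained_remark_general E C C' q q' v v' h1 h2
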